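/- Let F : H → H be continuous on a real Hilbert space and satisfy the coercivity condition ⟪u, F u⟫/‖u‖ → ∞ as ‖u‖ → ∞. Suppose for each a ∈ (0,1) the element u_a solves F(u_a) + a u_a = h. Then sup_{0<a<1} ‖u_a‖ < ∞. -/

import Mathlib

/-! Pairing the equation `F u + a • u = h` with `u` gives `⟪u, F u⟫ ≤ ⟪u, h⟫ ≤ ‖u‖ ‖h‖` for every
`a ≥ 0`, whereas coercivity forces `⟪u, F u⟫ / ‖u‖ > ‖h‖` once `‖u‖` is large. -/

section

variable {H : Type*} [NormedAddCommGroup H] [InnerProductSpace ℝ H]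

theorem inner_apply_le_norm_mul_norm_of_add_smul_eq {F : H → H} {v h : H} {a : ℝ}
    (hv : F v + a • v = h) (ha : 0 ≤ a) : inner ℝ v (F v) ≤ ‖v‖ * ‖h‖ := by
  have hpair : inner ℝ v (F v) + a * ‖v‖ ^ 2 = inner ℝ v h := by
    rw [← hv, inner_add_right, real_inner_smul_right, real_inner_self_eq_norm_sq]
  calc inner ℝ v (F v) ≤ inner ℝ v h := by nlinarith [sq_nonneg ‖v‖]
    _ ≤ ‖v‖ * ‖h‖ := real_inner_le_norm v h

theorem exists_norm_le_of_inner_apply_le_mul_norm {F : H → H}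
    (hcoer : ∀ M : ℝ, ∃ R : ℝ, ∀ u : H, ‖u‖ ≥ R → inner ℝ u (F u) / ‖u‖ ≥ M) (C : ℝ) :
    ∃ R : ℝ, ∀ v : H, inner ℝ v (F v) ≤ ‖v‖ * C → ‖v‖ ≤ R := by
  obtain ⟨R, hR⟩ := hcoer (C + 1)
  refine ⟨max R 0, fun v hv => ?_⟩
  by_contra! hlarge
  have hpos : 0 < ‖v‖ := (le_max_right R 0).trans_lt hlarge
  have hcoer_v := hR v ((le_max_left R 0).trans hlarge.le)
  rw [ge_iff_le, le_div_iff₀ hpos] at hcoer_v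
  nlinarith

end

theorem stmt_13_general {H : Type*} [NormedAddCommGroup H] [InnerProductSpace ℝ H]
    (F : H → H) (h : H)
    (hcoer : ∀ M : ℝ, ∃ R : ℝ, ∀ u : H, ‖u‖ ≥ R → (inner ℝ u (F u) : ℝ) / ‖u‖ ≥ M)
    (u : ℝ → H) (hu : ∀ a : ℝ, a ∈ Set.Ioo (0 : ℝ) 1 → F (u a) + a • u a = h) :
    ∃ c : ℝ, ∀ a : ℝ, a ∈ Set.Ioo (0 : ℝ) 1 → ‖u a‖ ≤ c := by
  obtain ⟨R, hR⟩ := exists_norm_le_of_inner_apply_le_mul_norm hcoer ‖h‖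
  exact ⟨R, fun a ha => hR _ (inner_apply_le_norm_mul_norm_of_add_smul_eq (hu a ha) ha.1.le)⟩

theorem stmt_13 {H : Type*} [NormedAddCommGroup H] [InnerProductSpace ℝ H] [CompleteSpace H]
    (F : H → H) (hc : Continuous F) (h : H)
    (hcoer : ∀ M : ℝ, ∃ R : ℝ, ∀ u : H, ‖u‖ ≥ R → (inner ℝ u (F u) : ℝ) / ‖u‖ ≥ M)
    (u : ℝ → H) (hu : ∀ a : ℝ, a ∈ Set.Ioo (0 : ℝ) 1 → F (u a) + a • u a = h) :
    ∃ c : ℝ, ∀ a : ℝ, a ∈ Set.Ioo (0 : ℝ) 1 → ‖u a‖ ≤ c :=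
  stmt_13_general F h hcoer u hu
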